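/- Let G = (V,E,c) be an edge-weighted directed graph in which every cycle has strictly positive weight. Then the maximum-cardinality redundant edge set of G is unique, and if G has at least one redundant edge, the maximum redundant edge set equals the set of all redundant edges of G. -/

import Mathlib

/-- `l` is a walk in edge set `E`: a nonempty list of vertices with consecutive edges. -/
def IsWalk {V : Type*} (E : Set (V × V)) (l : List V) : Prop :=
  l ≠ [] ∧ l.Chain' (fun a b => (a, b) ∈ E)

/-- The weight of a walk: sum of edge weights along consecutive pairs (with multiplicity). -/
def walkWeight {V : Type*} (c : V → V → ℝ) (l : List V) : ℝ :=
  ((l.zip l.tail).map fun p => c p.1 p.2).sum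

/-- `l` is a walk from `u` to `v`. -/
def IsWalkFrom {V : Type*} (E : Set (V × V)) (u v : V) (l : List V) : Prop :=
  IsWalk E l ∧ l.head? = some u ∧ l.getLast? = some v

/-- A closed walk: a walk with at least one edge whose first and last vertices agree. -/
def IsClosedWalk {V : Type*} (E : Set (V × V)) (l : List V) : Prop :=
  IsWalk E l ∧ 2 ≤ l.length ∧ l.head? = l.getLast?

/-- A simple path from `u` to `v`: a walk with all traversed vertices distinct. -/
def IsPathFrom {V : Type*} (E : Set (V × V)) (u v : V) (l : List V) : Prop :=
  IsWalkFrom E u v l ∧ l.Nodup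

/-- A cycle: a closed walk all of whose vertices other than the repeated endpoint are distinct. -/
def IsCycle {V : Type*} (E : Set (V × V)) (l : List V) : Prop :=
  IsClosedWalk E l ∧ l.tail.Nodup

/-- `x` satisfies the precedence relation system of `(V, E, c)`. -/
def Satisfies {V : Type*} (E : Set (V × V)) (c : V → V → ℝ) (x : V → ℝ) : Prop :=
  ∀ e ∈ E, x e.1 - x e.2 ≤ c e.1 e.2

/-- `R` is a redundant edge set of `(V, E, c)`: every edge of `R` has a replacement path
in the reduced graph of no greater weight. -/
def IsRedundantEdgeSet {V : Type*} (E : Set (V × V)) (c : V → V → ℝ)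
    (R : Set (V × V)) : Prop :=
  R ⊆ E ∧ ∀ e ∈ R, ∃ l, IsPathFrom (E \ R) e.1 e.2 l ∧ walkWeight c l ≤ c e.1 e.2

/-- `w` is the minimum weight of a walk from `i` to `j` in `(V, E, c)` (attained). -/
def IsMinWalkWeight {V : Type*} (E : Set (V × V)) (c : V → V → ℝ) (i j : V) (w : ℝ) : Prop :=
  (∃ l, IsWalkFrom E i j l ∧ walkWeight c l = w) ∧
  ∀ l, IsWalkFrom E i j l → w ≤ walkWeight c l

/-- The relation `∼`: `i ∼ j` iff `i = j` or some zero-weight closed walk traverses both. -/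
def Sim {V : Type*} (E : Set (V × V)) (c : V → V → ℝ) (i j : V) : Prop :=
  i = j ∨ ∃ l, IsClosedWalk E l ∧ walkWeight c l = 0 ∧ i ∈ l ∧ j ∈ l

/-- `R` is a maximum-cardinality redundant edge set of `(V, E, c)`. -/
def IsMaxRedundantEdgeSet {V : Type*} (E : Set (V × V)) (c : V → V → ℝ)
    (R : Set (V × V)) : Prop :=
  IsRedundantEdgeSet E c R ∧
    ∀ R' : Set (V × V), IsRedundantEdgeSet E c R' → R'.ncard ≤ R.ncard

/-!
Call an edge redundant if it alone forms a redundant edge set. Every redundant edge set consists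
of redundant edges, so it suffices to show that the set of all redundant edges is itself redundant,
i.e. that every simple path has a replacement of no greater weight avoiding all redundant edges.
Take a counterexample that is minimal for the order "smaller weight first, then more edges",
which is well founded because there are only finitely many simple paths. It contains a redundant
edge `(a, b)`; splicing in a replacement path for `(a, b)` yields a walk of no greater weight.
If that walk repeats a vertex, cutting out the closed detour strictly lowers the weight since
cycles are positive; otherwise it is a simple path with more edges. Either way we get a smaller
simple path, whose replacement also replaces the counterexample.
-/

section Walks

variable {V : Type*} {E : Set (V × V)} {c : V → V → ℝ}

lemma isWalk_iff {l : List V} : IsWalk E l ↔ l ≠ [] ∧ l.IsChain (fun a b => (a, b) ∈ E) :=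
  Iff.rfl

@[simp]
lemma walkWeight_singleton (c : V → V → ℝ) (a : V) : walkWeight c [a] = 0 := rfl

@[simp]
lemma walkWeight_cons_cons (c : V → V → ℝ) (a b : V) (l : List V) :
    walkWeight c (a :: b :: l) = c a b + walkWeight c (b :: l) := by
  simp [walkWeight]

lemma walkWeight_append_cons (c : V → V → ℝ) (l₁ : List V) (a : V) (l₂ : List V) :
    walkWeight c (l₁ ++ a :: l₂) = walkWeight c (l₁ ++ [a]) + walkWeight c (a :: l₂) := by
  induction l₁ with
  | nil => simp
  | cons x l ih =>
    cases l with
    | nil => simp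
    | cons y l => simp_all [add_assoc]

lemma walkWeight_append_tail {l₁ l₂ : List V} {v : V} (h₁ : l₁.getLast? = some v)
    (h₂ : l₂.head? = some v) :
    walkWeight c (l₁ ++ l₂.tail) = walkWeight c l₁ + walkWeight c l₂ := by
  obtain ⟨l₁, rfl⟩ := List.getLast?_eq_some_iff.1 h₁
  obtain ⟨l₂, rfl⟩ := List.head?_eq_some_iff.1 h₂
  simpa using walkWeight_append_cons c l₁ v l₂

lemma isWalkFrom_append_cons_iff {u v w : V} {l₁ l₂ : List V} :
    IsWalkFrom E u w (l₁ ++ v :: l₂) ↔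
      IsWalkFrom E u v (l₁ ++ [v]) ∧ IsWalkFrom E v w (v :: l₂) := by
  simp only [IsWalkFrom, isWalk_iff]
  rw [List.isChain_split]
  simp [List.head?_append, List.getLast?_append]
  tauto

lemma IsWalkFrom.append {u v w : V} {l₁ l₂ : List V} (h₁ : IsWalkFrom E u v l₁)
    (h₂ : IsWalkFrom E v w l₂) : IsWalkFrom E u w (l₁ ++ l₂.tail) := by
  obtain ⟨l₁, rfl⟩ := List.getLast?_eq_some_iff.1 h₁.2.2
  obtain ⟨l₂, rfl⟩ := List.head?_eq_some_iff.1 h₂.2.1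
  simpa using isWalkFrom_append_cons_iff.2 ⟨h₁, h₂⟩

lemma IsWalkFrom.mono {E' : Set (V × V)} (hE : E ⊆ E') {u v : V} {l : List V}
    (h : IsWalkFrom E u v l) : IsWalkFrom E' u v l :=
  ⟨⟨h.1.1, h.1.2.imp fun _ _ hab => hE hab⟩, h.2⟩

lemma IsWalkFrom.three_le_length {u v : V} {l : List V} (h : IsWalkFrom E u v l) (huv : u ≠ v)
    (hE : (u, v) ∉ E) : 3 ≤ l.length := by
  obtain ⟨r, rfl⟩ := List.head?_eq_some_iff.1 h.2.1
  match r, h with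
  | [], h => exact absurd (by simpa using h.2.2) huv
  | [w], h =>
    obtain rfl : w = v := by simpa using h.2.2
    exact absurd (List.isChain_pair.1 h.1.2) hE
  | _ :: _ :: _, _ => simp

lemma IsWalkFrom.of_detour {u w y : V} {l₁ l₂ l₃ : List V}
    (h : IsWalkFrom E u w (l₁ ++ y :: (l₂ ++ y :: l₃))) :
    IsWalkFrom E u w (l₁ ++ y :: l₃) ∧ IsWalkFrom E y y (y :: (l₂ ++ [y])) := by
  obtain ⟨hA, hB⟩ := isWalkFrom_append_cons_iff.1 h
  obtain ⟨hC, hD⟩ := (isWalkFrom_append_cons_iff (l₁ := y :: l₂)).1 hB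
  exact ⟨isWalkFrom_append_cons_iff.2 ⟨hA, hD⟩, hC⟩

lemma walkWeight_detour (c : V → V → ℝ) (l₁ l₂ l₃ : List V) (y : V) :
    walkWeight c (l₁ ++ y :: (l₂ ++ y :: l₃)) =
      walkWeight c (l₁ ++ y :: l₃) + walkWeight c (y :: (l₂ ++ [y])) := by
  rw [walkWeight_append_cons c l₁ y (l₂ ++ y :: l₃),
    show y :: (l₂ ++ y :: l₃) = (y :: l₂) ++ y :: l₃ from rfl, walkWeight_append_cons c (y :: l₂),
    walkWeight_append_cons c l₁ y l₃]
  simp only [List.cons_append]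
  ring

lemma IsWalkFrom.splice {u v a b : V} {p₁ p₂ Q : List V}
    (hP : IsWalkFrom E u v (p₁ ++ a :: b :: p₂)) (hQ : IsWalkFrom E a b Q) :
    IsWalkFrom E u v (p₁ ++ Q ++ p₂) ∧
      walkWeight c (p₁ ++ Q ++ p₂) + c a b =
        walkWeight c (p₁ ++ a :: b :: p₂) + walkWeight c Q := by
  obtain ⟨hA, hB⟩ := isWalkFrom_append_cons_iff.1 hP
  obtain ⟨-, hB⟩ := (isWalkFrom_append_cons_iff (l₁ := [a])).1 hB
  obtain ⟨r, rfl⟩ := List.head?_eq_some_iff.1 hQ.2.1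
  have hAQ := hA.append hQ
  rw [show p₁ ++ (a :: r) ++ p₂ = (p₁ ++ [a]) ++ (a :: r).tail ++ (b :: p₂).tail by simp,
    show p₁ ++ a :: b :: p₂ = (p₁ ++ [a]) ++ [a, b].tail ++ (b :: p₂).tail by simp]
  refine ⟨hAQ.append hB, ?_⟩
  rw [walkWeight_append_tail hAQ.2.2 hB.2.1, walkWeight_append_tail hA.2.2 hQ.2.1,
    walkWeight_append_tail (by simp) hB.2.1, walkWeight_append_tail hA.2.2 rfl]
  simp only [walkWeight_cons_cons, walkWeight_singleton]
  ring

lemma IsWalkFrom.diff_or_exists_mem {u v : V} {l : List V} (h : IsWalkFrom E u v l)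
    (S : Set (V × V)) :
    IsWalkFrom (E \ S) u v l ∨ ∃ p₁ a b p₂, l = p₁ ++ a :: b :: p₂ ∧ (a, b) ∈ S := by
  refine or_iff_not_imp_right.2 fun hS => ⟨⟨h.1.1, ?_⟩, h.2⟩
  refine List.isChain_iff_forall_rel_of_append_cons_cons.2 fun a b p₁ p₂ hl => ⟨?_, ?_⟩
  · exact List.isChain_iff_forall_rel_of_append_cons_cons.1 h.1.2 hl
  · exact fun hab => hS ⟨p₁, a, b, p₂, hl, hab⟩

end Walks

lemma List.exists_eq_append_cons_append_cons_of_not_nodup {α : Type*} :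
    ∀ {l : List α}, ¬ l.Nodup → ∃ y l₁ l₂ l₃, l = l₁ ++ y :: (l₂ ++ y :: l₃)
  | [], h => absurd List.nodup_nil h
  | a :: t, h => by
    by_cases ha : a ∈ t
    · obtain ⟨s₁, s₂, rfl⟩ := List.append_of_mem ha
      exact ⟨a, [], s₁, s₂, rfl⟩
    · obtain ⟨y, l₁, l₂, l₃, rfl⟩ :=
        exists_eq_append_cons_append_cons_of_not_nodup fun ht => h (List.nodup_cons.2 ⟨ha, ht⟩)
      exact ⟨y, a :: l₁, l₂, l₃, rfl⟩

section PositiveCycles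

variable {V : Type*} {E : Set (V × V)} {c : V → V → ℝ}

/-- A closed walk splits into a cycle or into two shorter closed walks. -/
lemma walkWeight_pos_of_isWalkFrom_self (hpos : ∀ l : List V, IsCycle E l → 0 < walkWeight c l)
    {x : V} {l : List V} (hl : IsWalkFrom E x x l) (hlen : 2 ≤ l.length) :
    0 < walkWeight c l := by
  by_cases hnd : l.tail.Nodup
  · exact hpos l ⟨⟨hl.1, hlen, hl.2.1.trans hl.2.2.symm⟩, hnd⟩
  obtain ⟨t, rfl⟩ := List.head?_eq_some_iff.1 hl.2.1
  obtain ⟨y, t₁, t₂, t₃, rfl⟩ := List.exists_eq_append_cons_append_cons_of_not_nodup hnd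
  obtain ⟨hshort, hloop⟩ := IsWalkFrom.of_detour (l₁ := x :: t₁) hl
  have := walkWeight_pos_of_isWalkFrom_self hpos hshort (by simp; omega)
  have := walkWeight_pos_of_isWalkFrom_self hpos hloop (by simp)
  rw [← List.cons_append, walkWeight_detour]
  positivity
termination_by l.length
decreasing_by all_goals subst_vars; simp <;> omega

lemma IsWalkFrom.exists_isPathFrom (hpos : ∀ l : List V, IsCycle E l → 0 < walkWeight c l)
    {u v : V} {l : List V} (hl : IsWalkFrom E u v l) :
    ∃ p, IsPathFrom E u v p ∧ walkWeight c p ≤ walkWeight c l ∧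
      (¬ l.Nodup → walkWeight c p < walkWeight c l) := by
  by_cases hnd : l.Nodup
  · exact ⟨l, ⟨hl, hnd⟩, le_rfl, absurd hnd⟩
  obtain ⟨y, l₁, l₂, l₃, rfl⟩ := List.exists_eq_append_cons_append_cons_of_not_nodup hnd
  obtain ⟨hshort, hloop⟩ := hl.of_detour
  have hloop_pos := walkWeight_pos_of_isWalkFrom_self hpos hloop (by simp)
  obtain ⟨p, hp, hle, -⟩ := hshort.exists_isPathFrom hpos
  rw [walkWeight_detour]
  exact ⟨p, hp, by linarith, fun _ => by linarith⟩
termination_by l.length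
decreasing_by subst_vars; simp

end PositiveCycles

section RedundantEdges

variable {V : Type*} {E : Set (V × V)} {c : V → V → ℝ}

def redundantEdges (E : Set (V × V)) (c : V → V → ℝ) : Set (V × V) :=
  {e | IsRedundantEdgeSet E c {e}}

lemma IsRedundantEdgeSet.subset_redundantEdges {R : Set (V × V)}
    (hR : IsRedundantEdgeSet E c R) : R ⊆ redundantEdges E c := by
  intro e he
  obtain ⟨l, hl, hw⟩ := hR.2 e he
  refine ⟨Set.singleton_subset_iff.2 (hR.1 he), fun f hf => ?_⟩
  obtain rfl := Set.mem_singleton_iff.1 hf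
  exact ⟨l, ⟨hl.1.mono (Set.sdiff_subset_sdiff_right (Set.singleton_subset_iff.2 he)), hl.2⟩, hw⟩

lemma IsPathFrom.exists_lt_of_mem_redundantEdges
    (hpos : ∀ l : List V, IsCycle E l → 0 < walkWeight c l) {u v a b : V} {p₁ p₂ : List V}
    (hP : IsPathFrom E u v (p₁ ++ a :: b :: p₂)) (hab : (a, b) ∈ redundantEdges E c) :
    ∃ P, IsPathFrom E u v P ∧ (walkWeight c P < walkWeight c (p₁ ++ a :: b :: p₂) ∨
      walkWeight c P ≤ walkWeight c (p₁ ++ a :: b :: p₂) ∧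
        (p₁ ++ a :: b :: p₂).length < P.length) := by
  obtain ⟨Q, hQ, hQw⟩ := hab.2 (a, b) rfl
  have hne : a ≠ b :=
    List.ne_of_not_mem_cons (List.nodup_cons.1 (List.nodup_append.1 hP.2).2.1).1
  have hQlen := hQ.1.three_le_length hne (fun h => h.2 rfl)
  obtain ⟨hW, hWw⟩ := hP.1.splice (c := c) (hQ.1.mono Set.sdiff_subset)
  by_cases hnd : (p₁ ++ Q ++ p₂).Nodup
  · exact ⟨_, ⟨hW, hnd⟩, Or.inr ⟨by linarith, by simp; omega⟩⟩
  · obtain ⟨P, hP, -, hlt⟩ := hW.exists_isPathFrom hpos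
    exact ⟨P, hP, Or.inl (by linarith [hlt hnd])⟩

theorem IsPathFrom.exists_isPathFrom_diff_redundantEdges [Finite V]
    (hpos : ∀ l : List V, IsCycle E l → 0 < walkWeight c l) {u v : V} {P : List V}
    (hP : IsPathFrom E u v P) :
    ∃ P', IsPathFrom (E \ redundantEdges E c) u v P' ∧ walkWeight c P' ≤ walkWeight c P := by
  have := Fintype.ofFinite V
  by_contra! hbad
  set S := {P | IsPathFrom E u v P ∧
    ∀ P', IsPathFrom (E \ redundantEdges E c) u v P' → walkWeight c P < walkWeight c P'}
  have hfin : S.Finite := (List.finite_length_le V (Fintype.card V)).subset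
    fun P hP => hP.1.2.length_le_card
  obtain ⟨P₀, ⟨hP₀, hP₀S⟩, hmin⟩ := S.exists_min_image
    (fun P => toLex (walkWeight c P, -(P.length : ℤ))) hfin ⟨P, hP, hbad⟩
  rcases hP₀.1.diff_or_exists_mem (redundantEdges E c) with hP₀R | ⟨p₁, a, b, p₂, rfl, hab⟩
  · exact (hP₀S P₀ ⟨hP₀R, hP₀.2⟩).false
  obtain ⟨P₁, hP₁, hlt⟩ := hP₀.exists_lt_of_mem_redundantEdges hpos hab
  have hP₁S : P₁ ∉ S := fun h => by
    have := hmin P₁ h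
    rw [Prod.Lex.toLex_le_toLex] at this
    grind
  obtain ⟨P', hP', hle⟩ : ∃ P', IsPathFrom (E \ redundantEdges E c) u v P' ∧
      walkWeight c P' ≤ walkWeight c P₁ := by
    simpa [S, hP₁] using hP₁S
  have hP₁P₀ : walkWeight c P₁ ≤ walkWeight c (p₁ ++ a :: b :: p₂) := hlt.elim le_of_lt And.left
  linarith [hP₀S P' hP']

theorem isRedundantEdgeSet_redundantEdges [Finite V]
    (hpos : ∀ l : List V, IsCycle E l → 0 < walkWeight c l) :
    IsRedundantEdgeSet E c (redundantEdges E c) := by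
  refine ⟨fun e he => he.1 rfl, fun e he => ?_⟩
  obtain ⟨Q, hQ, hQw⟩ := he.2 e rfl
  obtain ⟨P, hP, hPw⟩ :=
    IsPathFrom.exists_isPathFrom_diff_redundantEdges hpos ⟨hQ.1.mono Set.sdiff_subset, hQ.2⟩
  exact ⟨P, hP, hPw.trans hQw⟩

end RedundantEdges

theorem stmt7 {V : Type*} [Fintype V] (E : Set (V × V)) (c : V → V → ℝ)
    (hpos : ∀ l : List V, IsCycle E l → 0 < walkWeight c l) :
    (∀ R R' : Set (V × V), IsMaxRedundantEdgeSet E c R →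
        IsMaxRedundantEdgeSet E c R' → R = R') ∧
    ((∃ e : V × V, IsRedundantEdgeSet E c {e}) →
      IsMaxRedundantEdgeSet E c {e : V × V | IsRedundantEdgeSet E c {e}}) := by
  have hred := isRedundantEdgeSet_redundantEdges hpos
  have eq_of_max : ∀ R, IsMaxRedundantEdgeSet E c R → R = redundantEdges E c := fun R hR =>
    Set.eq_of_subset_of_ncard_le hR.1.subset_redundantEdges (hR.2 _ hred) (Set.toFinite _)
  refine ⟨fun R R' hR hR' => (eq_of_max R hR).trans (eq_of_max R' hR').symm, fun _ => ?_⟩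
  exact ⟨hred, fun R hR => Set.ncard_le_ncard hR.subset_redundantEdges (Set.toFinite _)⟩
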